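/- Suppose (f,g) ∈ 𝒞 has a hiding region 𝒦 ⊆ [0,1]. Then the forward orbit of 0 under the semigroup generated by f and g is disjoint from 𝒦. Consequently, the unique minimal set M of ⟨f,g⟩₊ satisfies M ∩ int(𝒦) = ∅; in particular, M is not equal to [0,1]. -/

import Mathlib

def unitI : Set ℝ := Set.Icc 0 1

def memC (f g : ℝ → ℝ) : Prop :=
  ContinuousOn f unitI ∧ ContinuousOn g unitI ∧
  Set.MapsTo f unitI unitI ∧ Set.MapsTo g unitI unitI ∧
  f 0 = 0 ∧ g 1 = 1 ∧
  (∀ x ∈ unitI, x ≠ 0 → 0 < f x ∧ f x < x) ∧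
  (∀ x ∈ unitI, x ≠ 1 → x < g x ∧ g x < 1) ∧
  StrictMonoOn f unitI ∧ StrictMonoOn g unitI

def orbit (f g : ℝ → ℝ) (x : ℝ) : Set ℝ :=
  { y | ∃ w : List (ℝ → ℝ), w ≠ [] ∧ (∀ h ∈ w, h = f ∨ h = g) ∧
        y = w.foldl (fun a h => h a) x }

def IsRegion (K : Set ℝ) : Prop :=
  ∃ S : Finset (ℝ × ℝ), S.Nonempty ∧ (∀ p ∈ S, p.1 < p.2) ∧
    (∀ p ∈ S, ∀ q ∈ S, p ≠ q → Disjoint (Set.Icc p.1 p.2) (Set.Icc q.1 q.2)) ∧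
    K = ⋃ p ∈ S, Set.Icc p.1 p.2

def IsHidingRegion (f g : ℝ → ℝ) (K : Set ℝ) : Prop :=
  IsRegion K ∧ K ⊆ unitI ∧ K ≠ unitI ∧
  K ∩ f '' unitI ⊆ f '' K ∧ K ∩ g '' unitI ⊆ g '' K

def IsMinimalSet (f g : ℝ → ℝ) (M : Set ℝ) : Prop :=
  M.Nonempty ∧ M ⊆ unitI ∧ ∀ x ∈ M, closure (orbit f g x) = M

/-!
The maps `f` and `g` are injective, so the hiding condition says exactly that they send no point
of `unitI \ K` into `K`: the complement of a hiding region is forward invariant. The `f`-iterates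
of any point decrease to `0`, the unique fixed point of `f`; a region containing `0` contains
some `[0, ε]`, so iterating `f` on a point outside `K` shows `0 ∉ K`. Hence the whole orbit of `0`
avoids `K`, and the minimal set, being the closure of that orbit, misses the (nonempty) interior
of `K`.
-/

open Set Filter Topology Function

theorem isFixedPt_of_tendsto_iterate_nhdsWithin {α : Type*} [TopologicalSpace α] [T2Space α]
    {f : α → α} {s : Set α} {x y : α} (hy : Tendsto (fun n => f^[n] x) atTop (𝓝[s] y))
    (hf : ContinuousWithinAt f s y) : IsFixedPt f y := by
  refine tendsto_nhds_unique ((tendsto_add_atTop_iff_nat 1).1 ?_) (tendsto_nhdsWithin_iff.1 hy).1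
  simp only [iterate_succ' f]
  exact hf.tendsto.comp hy

theorem mapsTo_diff_of_inter_image_subset {α β : Type*} {h : α → β} {s : Set α} {t : Set β}
    {K : Set α} {L : Set β} (hmaps : MapsTo h s t) (hinj : InjOn h s) (hKs : K ⊆ s)
    (hL : L ∩ h '' s ⊆ h '' K) : MapsTo h (s \ K) (t \ L) := by
  rintro x ⟨hx, hxK⟩
  refine ⟨hmaps hx, fun hxL => ?_⟩
  obtain ⟨k, hk, hkx⟩ := hL ⟨hxL, x, hx, rfl⟩
  exact hxK (hinj (hKs hk) hx hkx ▸ hk)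

theorem foldl_mem_of_mapsTo {α : Type*} {f g : α → α} {A : Set α} (hf : MapsTo f A A)
    (hg : MapsTo g A A) :
    ∀ w : List (α → α), (∀ h ∈ w, h = f ∨ h = g) → ∀ x ∈ A, w.foldl (fun a h => h a) x ∈ A
  | [], _, _, hx => hx
  | h :: w, hw, x, hx => by
    refine foldl_mem_of_mapsTo hf hg w (fun h' hh' => hw h' (List.mem_cons_of_mem _ hh')) _ ?_
    rcases hw h List.mem_cons_self with rfl | rfl
    exacts [hf hx, hg hx]

theorem orbit_subset_of_mapsTo {f g : ℝ → ℝ} {A : Set ℝ} (hf : MapsTo f A A) (hg : MapsTo g A A)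
    {x : ℝ} (hx : x ∈ A) : orbit f g x ⊆ A := by
  rintro _ ⟨w, -, hw, rfl⟩
  exact foldl_mem_of_mapsTo hf hg w hw x hx

theorem iterate_succ_mem_orbit (f g : ℝ → ℝ) (x : ℝ) (n : ℕ) : f^[n + 1] x ∈ orbit f g x := by
  refine ⟨List.replicate (n + 1) f, by simp, fun h hh => .inl (List.eq_of_mem_replicate hh), ?_⟩
  induction n generalizing x with
  | zero => rfl
  | succ n ih => rw [List.replicate_succ, List.foldl_cons, ← ih, iterate_succ_apply]

theorem memC.tendsto_iterate_left {f g : ℝ → ℝ} (h : memC f g) {x : ℝ} (hx : x ∈ unitI) :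
    Tendsto (fun n => f^[n] x) atTop (𝓝[unitI] 0) := by
  obtain ⟨hfc, -, hfI, -, hf0, -, hflt, -⟩ := h
  have hmem : ∀ n, f^[n] x ∈ unitI := fun n => hfI.iterate n hx
  have hanti : Antitone fun n => f^[n] x := by
    refine antitone_nat_of_succ_le fun n => ?_
    rw [iterate_succ_apply']
    rcases eq_or_ne (f^[n] x) 0 with h0 | h0
    · rw [h0, hf0]
    · exact (hflt _ (hmem n) h0).2.le
  have hlim := tendsto_atTop_ciInf hanti ⟨0, by rintro _ ⟨n, rfl⟩; exact (hmem n).1⟩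
  set L := ⨅ n, f^[n] x
  have hlim' : Tendsto (fun n => f^[n] x) atTop (𝓝[unitI] L) :=
    tendsto_nhdsWithin_iff.2 ⟨hlim, .of_forall hmem⟩
  have hL : L ∈ unitI := isClosed_Icc.mem_of_tendsto hlim (.of_forall hmem)
  have hfix : f L = L := isFixedPt_of_tendsto_iterate_nhdsWithin hlim' (hfc L hL)
  have hL0 : L = 0 := by_contra fun hne => (hflt L hL hne).2.ne hfix
  rwa [← hL0]

theorem memC.zero_mem_closure_orbit {f g : ℝ → ℝ} (h : memC f g) {x : ℝ} (hx : x ∈ unitI) :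
    (0 : ℝ) ∈ closure (orbit f g x) :=
  mem_closure_of_tendsto
    ((tendsto_nhdsWithin_iff.1 (h.tendsto_iterate_left hx)).1.comp (tendsto_add_atTop_nat 1))
    (.of_forall (iterate_succ_mem_orbit f g x))

theorem IsRegion.mem_nhdsGE {K : Set ℝ} (hK : IsRegion K) {a : ℝ} (hKa : K ⊆ Ici a)
    (ha : a ∈ K) : K ∈ 𝓝[≥] a := by
  obtain ⟨S, -, hlt, -, rfl⟩ := hK
  obtain ⟨p, hp, hap⟩ := mem_iUnion₂.1 ha
  have hsub : Icc p.1 p.2 ⊆ ⋃ p ∈ S, Icc p.1 p.2 :=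
    subset_biUnion_of_mem (u := fun p => Icc p.1 p.2) hp
  have hpa : p.1 = a := le_antisymm hap.1 (hKa (hsub ⟨le_rfl, (hlt p hp).le⟩))
  exact mem_of_superset (Icc_mem_nhdsGE (hpa ▸ hlt p hp)) (hpa ▸ hsub)

theorem IsRegion.interior_nonempty {K : Set ℝ} (hK : IsRegion K) : (interior K).Nonempty := by
  obtain ⟨S, ⟨p, hp⟩, hlt, -, rfl⟩ := hK
  refine (nonempty_Ioo.2 (hlt p hp)).mono (interior_maximal ?_ isOpen_Ioo)
  exact Ioo_subset_Icc_self.trans (subset_biUnion_of_mem (u := fun p => Icc p.1 p.2) hp)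

namespace IsHidingRegion

variable {f g : ℝ → ℝ} {K : Set ℝ}

theorem mapsTo_left (h : memC f g) (hK : IsHidingRegion f g K) :
    MapsTo f (unitI \ K) (unitI \ K) := by
  obtain ⟨-, -, hfI, -, -, -, -, -, hfs, -⟩ := h
  exact mapsTo_diff_of_inter_image_subset hfI hfs.injOn hK.2.1 hK.2.2.2.1

theorem mapsTo_right (h : memC f g) (hK : IsHidingRegion f g K) :
    MapsTo g (unitI \ K) (unitI \ K) := by
  obtain ⟨-, -, -, hgI, -, -, -, -, -, hgs⟩ := h
  exact mapsTo_diff_of_inter_image_subset hgI hgs.injOn hK.2.1 hK.2.2.2.2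

theorem zero_notMem (h : memC f g) (hK : IsHidingRegion f g K) : (0 : ℝ) ∉ K := by
  have hout := hK.mapsTo_left h
  obtain ⟨hreg, hKI, hKne, -, -⟩ := hK
  intro h0
  obtain ⟨x, hxI, hxK⟩ := sdiff_nonempty.2 fun hIK => hKne (hKI.antisymm hIK)
  have hnhds : K ∈ 𝓝[unitI] 0 :=
    nhdsWithin_mono _ (fun y hy => hy.1) (hreg.mem_nhdsGE (fun y hy => (hKI hy).1) h0)
  obtain ⟨n, hn⟩ := ((h.tendsto_iterate_left hxI).eventually hnhds).exists
  exact (hout.iterate n ⟨hxI, hxK⟩).2 hn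

theorem orbit_zero_subset (h : memC f g) (hK : IsHidingRegion f g K) :
    orbit f g 0 ⊆ unitI \ K :=
  orbit_subset_of_mapsTo (hK.mapsTo_left h) (hK.mapsTo_right h)
    ⟨⟨le_rfl, zero_le_one⟩, hK.zero_notMem h⟩

end IsHidingRegion

theorem IsMinimalSet.eq_closure_orbit_zero {f g : ℝ → ℝ} {M : Set ℝ} (h : memC f g)
    (hM : IsMinimalSet f g M) : M = closure (orbit f g 0) := by
  obtain ⟨⟨x, hx⟩, hMI, hclosure⟩ := hM
  have h0 : (0 : ℝ) ∈ M := hclosure x hx ▸ h.zero_mem_closure_orbit (hMI hx)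
  exact (hclosure 0 h0).symm

theorem hiding_region_nonminimal (f g : ℝ → ℝ) (K : Set ℝ)
    (h : memC f g) (hK : IsHidingRegion f g K) :
    (∀ y ∈ orbit f g 0, y ∉ K) ∧
    (∀ M : Set ℝ, IsMinimalSet f g M → M ∩ interior K = ∅ ∧ M ≠ unitI) := by
  have horbit := hK.orbit_zero_subset h
  refine ⟨fun y hy => (horbit hy).2, fun M hM => ?_⟩
  have hM : M ⊆ (interior K)ᶜ := by
    rw [hM.eq_closure_orbit_zero h, ← closure_compl]
    exact closure_mono fun y hy => (horbit hy).2
  refine ⟨(subset_compl_iff_disjoint_right.1 hM).inter_eq, fun hMI => ?_⟩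
  obtain ⟨hreg, hKI, -⟩ := hK
  obtain ⟨t, ht⟩ := hreg.interior_nonempty
  exact hM (hMI ▸ hKI (interior_subset ht)) ht
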